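/- arXiv:2512.19313 — 3 statements merged into one kernel-verified Lean document; each statement's English description precedes it below -/
import Mathlib

section
/- Let f : F_{p^n} → F_p be quadratic (algebraic degree at most 2). Then f is balanced if and only if there exists a ∈ F_{p^n} such that the derivative D_a f(x) = f(x+a) − f(x) is a nonzero constant function. -/
open Finset
open scoped Classical

noncomputable instance (p n : ℕ) [Fact p.Prime] : Fintype (GaloisField p n) :=
  Fintype.ofFinite _

noncomputable def omg (p : ℕ) : ℂ := Complex.exp (2 * Real.pi * Complex.I / p)

noncomputable def ee (p : ℕ) (c : ZMod p) : ℂ := omg p ^ c.val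

noncomputable def Tr (p n : ℕ) [Fact p.Prime] (x : GaloisField p n) : ZMod p :=
  Algebra.trace (ZMod p) (GaloisField p n) x

noncomputable def W (p n : ℕ) [Fact p.Prime] (f : GaloisField p n → ZMod p)
    (y : GaloisField p n) : ℂ :=
  ∑ x : GaloisField p n, ee p (f x - Tr p n (x * y))

noncomputable def D (p n : ℕ) [Fact p.Prime] (a : GaloisField p n) (f : GaloisField p n → ZMod p)
    (x : GaloisField p n) : ZMod p :=
  f (x + a) - f x

noncomputable def D2 (p n : ℕ) [Fact p.Prime] (a b : GaloisField p n) (f : GaloisField p n → ZMod p)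
    (x : GaloisField p n) : ZMod p :=
  f (x + a + b) - f (x + a) - f (x + b) + f x

def IsBalanced (p n : ℕ) [Fact p.Prime] (f : GaloisField p n → ZMod p) : Prop :=
  ∀ c : ZMod p, (Finset.univ.filter (fun x => f x = c)).card = p ^ (n - 1)

def Bent (p n : ℕ) [Fact p.Prime] (f : GaloisField p n → ZMod p) : Prop :=
  ∀ y : GaloisField p n, ‖W p n f y‖ ^ 2 = (p : ℝ) ^ n

def IsQuadratic (p n : ℕ) [Fact p.Prime] (f : GaloisField p n → ZMod p) : Prop :=
  ∀ a b : GaloisField p n, ∃ c : ZMod p, ∀ x, D2 p n a b f x = c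

def IsCubic (p n : ℕ) [Fact p.Prime] (f : GaloisField p n → ZMod p) : Prop :=
  ∀ a b c : GaloisField p n, ∃ l : ZMod p, ∀ x, D2 p n b c f (x + a) - D2 p n b c f x = l

/-! For quadratic `f`, the derivative `D_a f` again has constant derivatives, so either it is
constant (`a` is a linear structure of `f`) or `D_a f (x + b) = D_a f x + l` for some `b` and
some `l ≠ 0`; in the latter case `D_a f` is balanced, since shifting by `b` moves each fibre onto
the next one along the cycle `c, c + l, c + 2l, …` through all of `ZMod p`. Counting the pairs
`(a, x)` with `D_a f x = c` in two ways, once via the balancedness of `f`, shows that the number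
of linear structures `a` with `D_a f ≡ c` does not depend on `c`. As `a = 0` has `D_a f ≡ 0`,
some linear structure has `D_a f ≡ 1`. -/

section Fibers

variable {G : Type*} [AddGroup G] [Fintype G]

lemma card_fiber_add_of_shift {M : Type*} [AddGroup M] [DecidableEq M] {g : G → M} {b : G}
    {l : M} (h : ∀ x, g (x + b) = g x + l) (c : M) :
    #{x | g x = c + l} = #{x | g x = c} := by
  refine card_nbij' (· - b) (· + b) (fun y hy => ?_) (fun x hx => ?_)
    (fun y _ => sub_add_cancel y b) (fun x _ => add_sub_cancel_right x b)
  · simp only [coe_filter, mem_univ, true_and, Set.mem_ofPred_eq] at hy ⊢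
    rw [← sub_add_cancel y b, h] at hy
    exact add_right_cancel hy
  · simp only [coe_filter, mem_univ, true_and, Set.mem_ofPred_eq] at hx ⊢
    rw [h, hx]

lemma card_fiber_eq_of_shift {p : ℕ} [Fact p.Prime] {g : G → ZMod p} {b : G} {l : ZMod p}
    (hl : l ≠ 0) (h : ∀ x, g (x + b) = g x + l) (c c' : ZMod p) :
    #{x | g x = c} = #{x | g x = c'} := by
  have hmul : ∀ k : ℕ, #{x | g x = c + k * l} = #{x | g x = c} := by
    intro k
    induction k with
    | zero => simp
    | succ k ih => rw [Nat.cast_succ, add_one_mul, ← add_assoc, card_fiber_add_of_shift h, ih]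
  have := hmul ((c' - c) / l).val
  rwa [ZMod.natCast_zmod_val, div_mul_cancel₀ _ hl, add_sub_cancel, eq_comm] at this

lemma card_mul_card_fiber_of_shift {p : ℕ} [Fact p.Prime] {g : G → ZMod p} {b : G} {l : ZMod p}
    (hl : l ≠ 0) (h : ∀ x, g (x + b) = g x + l) (c : ZMod p) :
    p * #{x | g x = c} = Fintype.card G := by
  calc p * #{x | g x = c} = ∑ c' : ZMod p, #{x | g x = c'} := by
        rw [sum_congr rfl fun c' _ => card_fiber_eq_of_shift hl h c' c, sum_const, card_univ,
          ZMod.card, smul_eq_mul]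
    _ = Fintype.card G := (card_eq_sum_card_fiberwise fun x _ => mem_univ (g x)).symm

end Fibers

section LinearStructures

variable {G : Type*} [AddCommGroup G] [Fintype G] {p : ℕ} {f : G → ZMod p}

def IsLinearStructure (f : G → ZMod p) (a : G) : Prop :=
  ∀ x, f (x + a) - f x = f a - f 0

lemma card_fiber_derivative_of_isLinearStructure {a : G} (ha : IsLinearStructure f a)
    (c : ZMod p) :
    #{x | f (x + a) - f x = c} = if f a - f 0 = c then Fintype.card G else 0 := by
  split_ifs with hc
  · rw [filter_true_of_mem fun x _ => (ha x).trans hc, card_univ]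
  · rw [filter_false_of_mem fun x _ => (ha x).trans_ne hc, card_empty]

lemma card_mul_card_fiber_derivative [Fact p.Prime]
    (hf : ∀ a b, ∃ c, ∀ x, f (x + a + b) - f (x + a) - f (x + b) + f x = c)
    {a : G} (ha : ¬ IsLinearStructure f a) (c : ZMod p) :
    p * #{x | f (x + a) - f x = c} = Fintype.card G := by
  obtain ⟨x₀, hx₀⟩ := not_forall.mp ha
  obtain ⟨l, hl⟩ := hf a x₀
  have hshift : ∀ x, f (x + x₀ + a) - f (x + x₀) = f (x + a) - f x + l := fun x => by
    rw [← hl x, add_right_comm x a x₀]; ring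
  refine card_mul_card_fiber_of_shift (g := fun x => f (x + a) - f x) (fun hl0 => hx₀ ?_) hshift c
  simpa [hl0] using hshift 0

lemma sum_card_fiber_derivative (c : ZMod p) :
    ∑ a, #{x | f (x + a) - f x = c} = ∑ x, #{y | f y = c + f x} := by
  simp only [card_filter]
  rw [sum_comm]
  exact sum_congr rfl fun x _ =>
    Fintype.sum_equiv (Equiv.addLeft x) _ _ fun a => if_congr sub_eq_iff_eq_add rfl rfl

lemma mul_card_linearStructure_add_card [Fact p.Prime]
    (hf : ∀ a b, ∃ c, ∀ x, f (x + a + b) - f (x + a) - f (x + b) + f x = c)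
    (hbal : ∀ c, p * #{x | f x = c} = Fintype.card G) (c : ZMod p) :
    p * #{a | IsLinearStructure f a ∧ f a - f 0 = c} + #{a | ¬ IsLinearStructure f a} =
      Fintype.card G := by
  refine Nat.eq_of_mul_eq_mul_left (Fintype.card_pos (α := G)) ?_
  calc Fintype.card G * (p * #{a | IsLinearStructure f a ∧ f a - f 0 = c} +
        #{a | ¬ IsLinearStructure f a})
      = p * ∑ a, #{x | f (x + a) - f x = c} := by
        have hlin : ∑ a with IsLinearStructure f a, #{x | f (x + a) - f x = c} =
            #{a | IsLinearStructure f a ∧ f a - f 0 = c} * Fintype.card G := by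
          rw [sum_congr rfl fun a ha =>
              card_fiber_derivative_of_isLinearStructure (mem_filter.mp ha).2 c,
            ← sum_filter, filter_filter, sum_const, smul_eq_mul]
        have hnonlin : p * ∑ a with ¬ IsLinearStructure f a, #{x | f (x + a) - f x = c} =
            #{a | ¬ IsLinearStructure f a} * Fintype.card G := by
          rw [mul_sum, sum_congr rfl fun a ha =>
              card_mul_card_fiber_derivative hf (mem_filter.mp ha).2 c, sum_const, smul_eq_mul]
        rw [← sum_filter_add_sum_filter_not univ (IsLinearStructure f), mul_add p, hnonlin, hlin]
        ring
    _ = p * ∑ x, #{y | f y = c + f x} := by rw [sum_card_fiber_derivative]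
    _ = Fintype.card G * Fintype.card G := by
        rw [mul_sum, sum_congr rfl fun x _ => hbal (c + f x), sum_const, card_univ, smul_eq_mul]

theorem exists_forall_sub_eq_one_of_balanced [Fact p.Prime]
    (hf : ∀ a b, ∃ c, ∀ x, f (x + a + b) - f (x + a) - f (x + b) + f x = c)
    (hbal : ∀ c, p * #{x | f x = c} = Fintype.card G) :
    ∃ a, ∀ x, f (x + a) - f x = 1 := by
  have hcount := mul_card_linearStructure_add_card hf hbal
  have hzero : 0 < #{a | IsLinearStructure f a ∧ f a - f 0 = 0} :=
    card_pos.mpr ⟨0, mem_filter.mpr ⟨mem_univ 0, fun x => by simp, sub_self _⟩⟩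
  have hone : 0 < #{a | IsLinearStructure f a ∧ f a - f 0 = 1} :=
    Nat.eq_of_mul_eq_mul_left (Fact.out : p.Prime).pos
      (Nat.add_right_cancel ((hcount 0).trans (hcount 1).symm)) ▸ hzero
  obtain ⟨a, ha⟩ := card_pos.mp hone
  obtain ⟨hlin, hval⟩ := (mem_filter.mp ha).2
  exact ⟨a, fun x => (hlin x).trans hval⟩

end LinearStructures

-- `GaloisField p 0` is the splitting field of `X ^ p ^ 0 - X = 0`, that is, `ZMod p` itself.
lemma natCard_galoisField_zero (p : ℕ) [Fact p.Prime] : Nat.card (GaloisField p 0) = p := by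
  have : Polynomial.IsSplittingField (ZMod p) (GaloisField p 0)
      (Polynomial.X ^ p ^ 0 - Polynomial.X) := Polynomial.IsSplittingField.splittingField _
  have hbot : (⊤ : Subalgebra (ZMod p) (GaloisField p 0)) = ⊥ := by
    refine (Polynomial.IsSplittingField.splits_iff (GaloisField p 0)
      (Polynomial.X ^ p ^ 0 - Polynomial.X : Polynomial (ZMod p))).mp ?_
    rw [pow_zero, pow_one, sub_self]
    exact Polynomial.Splits.zero
  rw [Module.natCard_eq_pow_finrank (K := ZMod p),
    Subalgebra.bot_eq_top_iff_finrank_eq_one.mp hbot.symm, Nat.card_zmod, pow_one]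

lemma card_galoisField (p n : ℕ) [Fact p.Prime] :
    Fintype.card (GaloisField p n) = p * p ^ (n - 1) := by
  rw [← Nat.card_eq_fintype_card]
  rcases Nat.eq_zero_or_pos n with rfl | hn
  · rw [natCard_galoisField_zero, pow_zero, mul_one]
  · rw [GaloisField.card p n hn.ne', ← pow_succ', Nat.sub_add_cancel hn]

lemma isBalanced_iff (p n : ℕ) [Fact p.Prime] (f : GaloisField p n → ZMod p) :
    IsBalanced p n f ↔ ∀ c, p * #{x | f x = c} = Fintype.card (GaloisField p n) := by
  simp only [IsBalanced, card_galoisField, Nat.mul_left_cancel_iff (Fact.out : p.Prime).pos]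

theorem stmt_7 (p n : ℕ) [Fact p.Prime] (f : GaloisField p n → ZMod p)
    (hf : IsQuadratic p n f) :
    IsBalanced p n f ↔
      ∃ a : GaloisField p n, ∃ l : ZMod p, l ≠ 0 ∧ ∀ x, D p n a f x = l := by
  rw [isBalanced_iff]
  constructor
  · intro hbal
    obtain ⟨a, ha⟩ := exists_forall_sub_eq_one_of_balanced hf hbal
    exact ⟨a, 1, one_ne_zero, ha⟩
  · rintro ⟨a, l, hl, hD⟩
    exact card_mul_card_fiber_of_shift hl fun x => eq_add_of_sub_eq' (hD x)
end

section
/- Let p be an odd prime and f : F_{p^n} → F_p a weakly regular bent function with dual f*, so W_f(v) = u · p^{n/2} ω^{f*(v)} for a fixed unimodular constant u. Then for all b, c ∈ F_{p^n}: W_{D_c f}(b) = ω^{Tr_n(bc)} W_{D_b f*}(−c). -/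
/-!
Expanding `∑_y W_f(y) · conj (W_f(y - b)) · ω^{Tr(c y)}` and summing over `y` first, orthogonality of
the characters `y ↦ ω^{Tr(t y)}` collapses it to `q · W_{D_c f}(b)` with `q = |F_{pⁿ}|`.
Substituting instead the weakly regular form `W_f = a · ω^{f*}` (`a = u p^{n/2}`) turns each
summand into `|a|² ω^{f*(y) - f*(y - b) + Tr(c y)}`, whose sum is `|a|² ω^{Tr(b c)} W_{D_b f*}(-c)`.
Comparing the two evaluations at `b = c = 0` gives `|a|² = q`.
-/

open Finset
open scoped Classical

section Characters

variable {p : ℕ} [Fact p.Prime]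

lemma ee_eq_stdAddChar (c : ZMod p) : ee p c = ZMod.stdAddChar c := by
  rw [ee, omg, ← Complex.exp_nat_mul, ZMod.stdAddChar_apply, ZMod.toCircle_apply]
  congr 1
  ring

lemma ee_zero : ee p (0 : ZMod p) = 1 := by
  rw [ee_eq_stdAddChar, AddChar.map_zero_eq_one]

lemma ee_add (a b : ZMod p) : ee p (a + b) = ee p a * ee p b := by
  simp only [ee_eq_stdAddChar, AddChar.map_add_eq_mul]

lemma conj_ee (a : ZMod p) : starRingEnd ℂ (ee p a) = ee p (-a) := by
  simp only [ee_eq_stdAddChar, AddChar.map_neg_eq_conj]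

variable (p) (n : ℕ)

noncomputable def traceChar : AddChar (GaloisField p n) ℂ :=
  ZMod.stdAddChar.compAddMonoidHom (Algebra.trace (ZMod p) (GaloisField p n)).toAddMonoidHom

lemma ee_Tr (x : GaloisField p n) : ee p (Tr p n x) = traceChar p n x :=
  ee_eq_stdAddChar _

lemma isPrimitive_traceChar : (traceChar p n).IsPrimitive := by
  refine AddChar.IsPrimitive.of_ne_one fun h => ?_
  obtain ⟨x, hx⟩ := Algebra.trace_surjective (ZMod p) (GaloisField p n) 1
  have h1 : ZMod.stdAddChar (1 : ZMod p) = ZMod.stdAddChar (0 : ZMod p) := by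
    rw [AddChar.map_zero_eq_one, ← hx]
    exact DFunLike.congr_fun h x
  exact one_ne_zero (ZMod.injective_stdAddChar h1)

lemma sum_ee_Tr_mul (t : GaloisField p n) :
    ∑ x : GaloisField p n, ee p (Tr p n (t * x))
      = if t = 0 then (Fintype.card (GaloisField p n) : ℂ) else 0 := by
  simpa only [ee_Tr, mul_comm t, apply_ite (Nat.cast : ℕ → ℂ), Nat.cast_zero] using
    AddChar.sum_mulShift t (isPrimitive_traceChar p n)

end Characters

section Walsh

variable {p n : ℕ} [Fact p.Prime]

lemma W_D_zero_zero (g : GaloisField p n → ZMod p) :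
    W p n (D p n 0 g) 0 = Fintype.card (GaloisField p n) := by
  simp [W, D, Tr, ee_zero]

noncomputable def walshCorr (g : GaloisField p n → ZMod p) (b c : GaloisField p n) : ℂ :=
  ∑ y : GaloisField p n, W p n g y * starRingEnd ℂ (W p n g (y - b)) * ee p (Tr p n (c * y))

lemma walshCorr_eq_card_mul_W_D (g : GaloisField p n → ZMod p) (b c : GaloisField p n) :
    walshCorr g b c = Fintype.card (GaloisField p n) * W p n (D p n c g) b := by
  have expand : ∀ y x z : GaloisField p n,
      ee p (g x - Tr p n (x * y)) * starRingEnd ℂ (ee p (g z - Tr p n (z * (y - b))))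
          * ee p (Tr p n (c * y))
        = ee p (g x - g z - Tr p n (z * b)) * ee p (Tr p n ((z - x + c) * y)) := by
    intro y x z
    rw [conj_ee, ← ee_add, ← ee_add, ← ee_add]
    congr 1
    simp only [Tr, mul_sub, sub_mul, add_mul, map_sub, map_add]
    ring
  have collapse : ∀ x : GaloisField p n,
      ∑ z : GaloisField p n, ∑ y : GaloisField p n,
          ee p (g x - g z - Tr p n (z * b)) * ee p (Tr p n ((z - x + c) * y))
        = ee p (g x - g (x - c) - Tr p n ((x - c) * b)) * Fintype.card (GaloisField p n) := by
    intro x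
    simp only [← Finset.mul_sum, sum_ee_Tr_mul, sub_add, sub_eq_zero, mul_ite, mul_zero,
      Fintype.sum_ite_eq']
  calc walshCorr g b c
      = ∑ x : GaloisField p n, ∑ z : GaloisField p n, ∑ y : GaloisField p n,
          ee p (g x - g z - Tr p n (z * b)) * ee p (Tr p n ((z - x + c) * y)) := by
        simp only [walshCorr, W, map_sum, Finset.sum_mul_sum]
        simp only [Finset.sum_mul, expand]
        exact Finset.sum_comm.trans (Finset.sum_congr rfl fun x _ => Finset.sum_comm)
    _ = ∑ x : GaloisField p n,
          ee p (g x - g (x - c) - Tr p n ((x - c) * b)) * Fintype.card (GaloisField p n) := by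
        simp only [collapse]
    _ = Fintype.card (GaloisField p n) * W p n (D p n c g) b := by
        rw [← Finset.sum_mul, mul_comm, W]
        congr 1
        refine (Fintype.sum_equiv (Equiv.addRight c) _ _ fun x => ?_).symm
        simp only [Equiv.coe_addRight, D, add_sub_cancel_right]

lemma walshCorr_of_W_eq_mul_ee {f fstar : GaloisField p n → ZMod p} {a : ℂ}
    (hW : ∀ v, W p n f v = a * ee p (fstar v)) (b c : GaloisField p n) :
    walshCorr f b c = Complex.normSq a * (ee p (Tr p n (b * c)) * W p n (D p n b fstar) (-c)) := by
  have term : ∀ y : GaloisField p n,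
      W p n f y * starRingEnd ℂ (W p n f (y - b)) * ee p (Tr p n (c * y))
        = Complex.normSq a * ee p (fstar y - fstar (y - b) + Tr p n (c * y)) := by
    intro y
    rw [hW, hW, map_mul, conj_ee, Complex.normSq_eq_conj_mul_self, ee_add, sub_eq_add_neg (fstar y),
      ee_add]
    ring
  calc walshCorr f b c
      = Complex.normSq a * ∑ y : GaloisField p n,
          ee p (fstar y - fstar (y - b) + Tr p n (c * y)) := by
        simp only [walshCorr, term, Finset.mul_sum]
    _ = Complex.normSq a * ∑ t : GaloisField p n,
          ee p (Tr p n (b * c)) * ee p (D p n b fstar t - Tr p n (t * -c)) := by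
        congr 1
        refine (Fintype.sum_equiv (Equiv.addRight b) _ _ fun t => ?_).symm
        rw [Equiv.coe_addRight, add_sub_cancel_right, ← ee_add, D]
        congr 1
        rw [mul_comm b c, mul_neg, mul_comm t c]
        simp only [Tr, mul_add, map_add, map_neg]
        ring
    _ = Complex.normSq a * (ee p (Tr p n (b * c)) * W p n (D p n b fstar) (-c)) := by
        simp only [W, Finset.mul_sum]

end Walsh

theorem stmt_11_general (p n : ℕ) [Fact p.Prime]
    (f fstar : GaloisField p n → ZMod p) (u : ℂ)
    (hwr : ∀ v : GaloisField p n,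
      W p n f v = u * (Real.sqrt ((p : ℝ) ^ n) : ℂ) * ee p (fstar v)) :
    ∀ b c : GaloisField p n,
      W p n (D p n c f) b = ee p (Tr p n (b * c)) * W p n (D p n b fstar) (-c) := by
  set q : ℂ := (Fintype.card (GaloisField p n) : ℂ)
  have hq : q ≠ 0 := Nat.cast_ne_zero.mpr Fintype.card_ne_zero
  have key : ∀ b c : GaloisField p n, q * W p n (D p n c f) b
      = Complex.normSq (u * Real.sqrt ((p : ℝ) ^ n))
          * (ee p (Tr p n (b * c)) * W p n (D p n b fstar) (-c)) := fun b c =>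
    (walshCorr_eq_card_mul_W_D f b c).symm.trans (walshCorr_of_W_eq_mul_ee hwr b c)
  have amplitude : (Complex.normSq (u * Real.sqrt ((p : ℝ) ^ n)) : ℂ) = q := by
    have h00 := key 0 0
    rw [neg_zero, W_D_zero_zero, W_D_zero_zero, mul_zero, Tr, map_zero, ee_zero, one_mul] at h00
    exact (mul_right_cancel₀ hq h00).symm
  rw [amplitude] at key
  exact fun b c => mul_left_cancel₀ hq (key b c)

theorem stmt_11 (p n : ℕ) [Fact p.Prime] (hp : Odd p)
    (f fstar : GaloisField p n → ZMod p) (u : ℂ) (hu : ‖u‖ = 1)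
    (hwr : ∀ v : GaloisField p n,
      W p n f v = u * (Real.sqrt ((p : ℝ) ^ n) : ℂ) * ee p (fstar v)) :
    ∀ b c : GaloisField p n,
      W p n (D p n c f) b = ee p (Tr p n (b * c)) * W p n (D p n b fstar) (-c) :=
  stmt_11_general p n f fstar u hwr
end

section
/- Let k be odd, j ∈ {0, 2k} (so j is even), and t odd. Then the congruence t(3^j − 1)/2 + z(3^{2j} − 1) ≡ (3^k − 1)/2 (mod 3^k − 1) has no integer solution z. -/
open Finset
open scoped Classical

theorem stmt_18 (k j : ℕ) (t : ℤ) (hk : Odd k) (hj : j = 0 ∨ j = 2 * k)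
    (ht : Odd t) :
    ¬ ∃ z : ℤ, ((3 : ℤ) ^ k - 1) ∣
      (t * (((3 : ℤ) ^ j - 1) / 2) + z * ((3 : ℤ) ^ (2 * j) - 1)
        - ((3 : ℤ) ^ k - 1) / 2) := by
  rintro ⟨z, hz⟩
  set N : ℤ := (3 : ℤ) ^ k - 1 with hN
  have hk1 : 1 ≤ k := hk.pos
  have hN2 : 2 ≤ N := by
    have : (3 : ℤ) ^ 1 ≤ 3 ^ k := pow_le_pow_right₀ (by norm_num) hk1
    simp at this; omega
  have hodd3k : Odd ((3:ℤ)^k) := Odd.pow (by decide)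
  have h2 : (2 : ℤ) ∣ (3 : ℤ) ^ k + 1 := by
    rcases hodd3k with ⟨m, hm⟩; omega
  have hdvd1 : N ∣ t * (((3 : ℤ) ^ j - 1) / 2) := by
    rcases hj with rfl | rfl
    · simp
    · have hfac : (3 : ℤ) ^ (2 * k) - 1 = N * ((3 : ℤ) ^ k + 1) := by
        rw [hN, two_mul, pow_add]; ring
      have : ((3 : ℤ) ^ (2 * k) - 1) / 2 = N * (((3 : ℤ) ^ k + 1) / 2) := by
        rw [hfac, Int.mul_ediv_assoc _ h2]
      rw [this]
      exact Dvd.dvd.mul_left ⟨_, rfl⟩ t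
  have hdvd2 : N ∣ z * ((3 : ℤ) ^ (2 * j) - 1) := by
    rcases hj with rfl | rfl
    · simp
    · have hd : N ∣ (3 : ℤ) ^ (2 * (2 * k)) - 1 := by
        have h := sub_dvd_pow_sub_pow ((3:ℤ)^k) 1 4
        simp only [one_pow] at h
        have h4 : ((3:ℤ)^k)^4 = 3 ^ (2 * (2 * k)) := by rw [← pow_mul]; ring_nf
        rwa [h4] at h
      exact Dvd.dvd.mul_left hd z
  have hdvdhalf : N ∣ N / 2 := by
    have h3 : N ∣ -(N / 2) := by
      have := dvd_sub hz (dvd_add hdvd1 hdvd2)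
      simpa using this
    exact dvd_neg.mp h3
  have hpos : 0 < N / 2 := by omega
  have := Int.le_of_dvd hpos hdvdhalf
  omega
end
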